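/- Let q, a, b, c ∈ ℂ with |q| < 1, a ≠ 0, b ≠ 0, |c/(a b)| < 1, and suppose c q^j ≠ 1 for all integers j ≥ 0. Then the q-Gauss sum holds: ∑_{k=0}^∞ (a;q)_k (b;q)_k (c/(a b))^k / ((q;q)_k (c;q)_k) = (c/a;q)_∞ (c/b;q)_∞ / ((c;q)_∞ (c/(a b);q)_∞), where the series converges absolutely and the denominator on the right is nonzero. -/

import Mathlib

/-!
Put `F(c, z) = ∑ₖ (a;q)ₖ (b;q)ₖ zᵏ / ((q;q)ₖ (c;q)ₖ)` with `c = a b z`. The q-WZ certificate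
`(a;q)ₖ (b;q)ₖ zᵏ (1 - qᵏ)(1 - c qᵏ) / ((q;q)ₖ (cq;q)ₖ)` telescopes the termwise difference of the
contiguous relation `(1 - c)(1 - z) F(c, z) = (1 - az)(1 - bz) F(cq, zq)`. Iterating it `n`
times gives `(c;q)ₙ (z;q)ₙ F(c, z) = (az;q)ₙ (bz;q)ₙ F(cqⁿ, zqⁿ)`. The terms of `F(cqⁿ, zqⁿ)` are
bounded by `K |z|ᵏ` uniformly in `n`, because `(cqⁿ;q)ₖ = (c;q)ₙ₊ₖ / (c;q)ₙ` and the finite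
products converge to nonzero limits; so by dominated convergence `F(cqⁿ, zqⁿ) → 1`, and letting
`n → ∞` gives the identity, with `az = c/b` and `bz = c/a`.
-/

/-- The finite q-shifted factorial `(a;q)_n = ∏_{j=0}^{n-1} (1 - a q^j)`. -/
noncomputable def qPoch (q a : ℂ) (n : ℕ) : ℂ := ∏ j ∈ Finset.range n, (1 - a * q ^ j)

/-- The infinite q-shifted factorial `(a;q)_∞ = ∏_{j=0}^{∞} (1 - a q^j)`. -/
noncomputable def qPochInf (q a : ℂ) : ℂ := ∏' j : ℕ, (1 - a * q ^ j)

open Filter Finset Topology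

lemma exists_norm_le_of_tendsto {E : Type*} [SeminormedAddCommGroup E] {f : ℕ → E} {L : E}
    (hf : Tendsto f atTop (𝓝 L)) :
    ∃ B, 0 ≤ B ∧ ∀ n, ‖f n‖ ≤ B := by
  obtain ⟨B, hB⟩ := isBounded_iff_forall_norm_le.mp (Metric.isBounded_range_of_tendsto f hf)
  exact ⟨B, (norm_nonneg _).trans (hB _ ⟨0, rfl⟩), fun n => hB _ ⟨n, rfl⟩⟩

lemma tsum_eq_tsum_of_sub_eq_sub_succ {G : Type*} [AddCommGroup G] [TopologicalSpace G]
    [IsTopologicalAddGroup G] [T2Space G] {f g E : ℕ → G} (hf : Summable f) (hg : Summable g)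
    (hE₀ : E 0 = 0) (hE : Tendsto E atTop (𝓝 0)) (hfg : ∀ k, f k - g k = E k - E (k + 1)) :
    ∑' k, f k = ∑' k, g k := by
  have hsum : HasSum (fun k => f k - g k) 0 := by
    refine (hf.sub hg).hasSum_iff_tendsto_nat.mpr ?_
    simp only [hfg, sum_range_sub', hE₀, zero_sub]
    simpa using hE.neg
  rw [← sub_eq_zero, ← hf.tsum_sub hg, hsum.tsum_eq]

lemma prod_range_mul_eq_prod_range_mul {M : Type*} [CommMonoid M] {r s S : ℕ → M}
    (h : ∀ n, r n * S n = s n * S (n + 1)) (n : ℕ) :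
    (∏ j ∈ range n, r j) * S 0 = (∏ j ∈ range n, s j) * S n := by
  induction n with
  | zero => simp
  | succ n ih =>
    rw [prod_range_succ, prod_range_succ, mul_right_comm, ih, mul_assoc, mul_comm (S n), h,
      mul_assoc]

section QPochhammer

variable {q x : ℂ}

@[simp]
lemma qPoch_zero (q x : ℂ) : qPoch q x 0 = 1 := prod_range_zero _

lemma qPoch_succ (q x : ℂ) (n : ℕ) : qPoch q x (n + 1) = qPoch q x n * (1 - x * q ^ n) :=
  prod_range_succ _ _

lemma qPoch_succ' (q x : ℂ) (n : ℕ) : qPoch q x (n + 1) = (1 - x) * qPoch q (x * q) n := by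
  simp only [qPoch, prod_range_succ', pow_succ, pow_zero, mul_one, mul_assoc, mul_comm q]
  ring

lemma qPoch_add (q x : ℂ) (m n : ℕ) :
    qPoch q x (m + n) = qPoch q x m * qPoch q (x * q ^ m) n := by
  simp only [qPoch, prod_range_add, pow_add, mul_assoc, mul_comm (q ^ m)]

lemma continuous_qPoch (q : ℂ) (n : ℕ) : Continuous fun x => qPoch q x n :=
  continuous_finsetProd _ fun _ _ => by fun_prop

lemma qPoch_ne_zero (hx : ∀ j, x * q ^ j ≠ 1) (n : ℕ) : qPoch q x n ≠ 0 :=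
  prod_ne_zero_iff.mpr fun j _ => sub_ne_zero.mpr (hx j).symm

lemma norm_mul_pow_le (hq : ‖q‖ ≤ 1) (x : ℂ) (n : ℕ) : ‖x * q ^ n‖ ≤ ‖x‖ := by
  rw [norm_mul, norm_pow]
  exact mul_le_of_le_one_right (norm_nonneg x) (pow_le_one₀ (norm_nonneg q) hq)

lemma mul_pow_ne_one (hq : ‖q‖ ≤ 1) (hx : ‖x‖ < 1) (j : ℕ) : x * q ^ j ≠ 1 := by
  intro h
  simpa [h] using (norm_mul_pow_le hq x j).trans_lt hx

lemma mul_pow_mul_pow_ne_one (hx : ∀ j, x * q ^ j ≠ 1) (m j : ℕ) : x * q ^ m * q ^ j ≠ 1 := by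
  simpa [mul_assoc, ← pow_add] using hx (m + j)

lemma summable_norm_mul_pow (hq : ‖q‖ < 1) (x : ℂ) : Summable fun j : ℕ => ‖x * q ^ j‖ := by
  simpa [norm_mul, norm_pow] using (summable_geometric_of_lt_one (norm_nonneg q) hq).mul_left ‖x‖

lemma hasProd_qPochInf (hq : ‖q‖ < 1) (x : ℂ) :
    HasProd (fun j => 1 - x * q ^ j) (qPochInf q x) := by
  simp only [sub_eq_add_neg]
  exact (Complex.multipliable_one_add_of_summable
    (summable_norm_mul_pow hq x).of_norm.neg).hasProd

lemma tendsto_qPoch (hq : ‖q‖ < 1) (x : ℂ) :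
    Tendsto (qPoch q x) atTop (𝓝 (qPochInf q x)) :=
  (hasProd_qPochInf hq x).tendsto_prod_nat

lemma qPochInf_ne_zero (hq : ‖q‖ < 1) (hx : ∀ j, x * q ^ j ≠ 1) : qPochInf q x ≠ 0 := by
  simp only [qPochInf, sub_eq_add_neg]
  exact tprod_one_add_ne_zero_of_summable
    (fun j => by simpa [← sub_eq_add_neg, sub_eq_zero] using (hx j).symm)
    (by simpa using summable_norm_mul_pow hq x)

lemma exists_norm_qPoch_le (hq : ‖q‖ < 1) (x : ℂ) : ∃ B, 0 ≤ B ∧ ∀ n, ‖qPoch q x n‖ ≤ B :=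
  exists_norm_le_of_tendsto (tendsto_qPoch hq x)

lemma exists_norm_inv_qPoch_le (hq : ‖q‖ < 1) (hx : ∀ j, x * q ^ j ≠ 1) :
    ∃ M, 0 ≤ M ∧ ∀ n, ‖(qPoch q x n)⁻¹‖ ≤ M :=
  exists_norm_le_of_tendsto ((tendsto_qPoch hq x).inv₀ (qPochInf_ne_zero hq hx))

lemma tendsto_mul_pow_zero (hq : ‖q‖ < 1) (x : ℂ) :
    Tendsto (fun n => x * q ^ n) atTop (𝓝 0) := by
  simpa using (tendsto_pow_atTop_nhds_zero_of_norm_lt_one hq).const_mul x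

end QPochhammer

noncomputable def qGaussTerm (q a b c z : ℂ) (k : ℕ) : ℂ :=
  qPoch q a k * qPoch q b k * z ^ k / (qPoch q q k * qPoch q c k)

section QGauss

variable {q a b c z : ℂ}

lemma exists_norm_qGaussTerm_le (hq : ‖q‖ < 1) (hc : ∀ j, c * q ^ j ≠ 1) (a b : ℂ) :
    ∃ K, 0 ≤ K ∧ ∀ n k z, ‖qGaussTerm q a b (c * q ^ n) z k‖ ≤ K * ‖z‖ ^ k := by
  obtain ⟨Ba, hBa₀, hBa⟩ := exists_norm_qPoch_le hq a
  obtain ⟨Bb, hBb₀, hBb⟩ := exists_norm_qPoch_le hq b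
  obtain ⟨Bc, hBc₀, hBc⟩ := exists_norm_qPoch_le hq c
  obtain ⟨Mq, hMq₀, hMq⟩ := exists_norm_inv_qPoch_le hq (mul_pow_ne_one hq.le hq)
  obtain ⟨Mc, hMc₀, hMc⟩ := exists_norm_inv_qPoch_le hq hc
  refine ⟨Ba * Bb * (Mq * (Bc * Mc)),
    mul_nonneg (mul_nonneg hBa₀ hBb₀) (mul_nonneg hMq₀ (mul_nonneg hBc₀ hMc₀)), fun n k z => ?_⟩
  have hshift : (qPoch q (c * q ^ n) k)⁻¹ = qPoch q c n * (qPoch q c (n + k))⁻¹ := by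
    rw [qPoch_add, mul_inv, ← mul_assoc, mul_inv_cancel₀ (qPoch_ne_zero hc n), one_mul]
  rw [qGaussTerm, div_eq_mul_inv, mul_inv, hshift, norm_mul, norm_mul, norm_mul, norm_mul,
    norm_mul, norm_pow, mul_right_comm _ (‖z‖ ^ k)]
  gcongr
  exacts [hBa k, hBb k, hMq k, hBc n, hMc (n + k)]

lemma summable_qGaussTerm (hq : ‖q‖ < 1) (hc : ∀ j, c * q ^ j ≠ 1) (hz : ‖z‖ < 1) (a b : ℂ) :
    Summable (qGaussTerm q a b c z) := by
  obtain ⟨K, -, hK⟩ := exists_norm_qGaussTerm_le hq hc a b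
  refine .of_norm_bounded ((summable_geometric_of_lt_one (norm_nonneg z) hz).mul_left K)
    fun k => ?_
  simpa using hK 0 k z

noncomputable def qGaussCert (q a b c z : ℂ) (k : ℕ) : ℂ :=
  qGaussTerm q a b (c * q) z k * ((1 - q ^ k) * (1 - c * q ^ k))

lemma qGaussTerm_contiguous (hq : ∀ j, q * q ^ j ≠ 1) (hc : ∀ j, c * q ^ j ≠ 1)
    (habz : a * b * z = c) (k : ℕ) :
    (1 - c) * (1 - z) * qGaussTerm q a b c z k
        - (1 - a * z) * (1 - b * z) * qGaussTerm q a b (c * q) (z * q) k =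
      qGaussCert q a b c z k - qGaussCert q a b c z (k + 1) := by
  have hcq (j : ℕ) : c * q * q ^ j ≠ 1 := by simpa using mul_pow_mul_pow_ne_one hc 1 j
  have hck : qPoch q c k = (1 - c) * qPoch q (c * q) k / (1 - c * q ^ k) := by
    rw [eq_div_iff (sub_ne_zero.mpr (hc k).symm), ← qPoch_succ, qPoch_succ']
  have : 1 - c ≠ 0 := sub_ne_zero.mpr (by simpa using (hc 0).symm)
  have := qPoch_ne_zero hq k
  have := qPoch_ne_zero hcq k
  have := sub_ne_zero.mpr (hq k).symm
  have := sub_ne_zero.mpr (hc k).symm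
  have := sub_ne_zero.mpr (hcq k).symm
  simp only [qGaussCert, qGaussTerm, qPoch_succ _ a, qPoch_succ _ b, qPoch_succ _ q,
    qPoch_succ _ (c * q), hck]
  subst habz
  field_simp
  ring

lemma tsum_qGaussTerm_contiguous (hq : ‖q‖ < 1) (hz : ‖z‖ < 1) (hc : ∀ j, c * q ^ j ≠ 1)
    (habz : a * b * z = c) :
    (1 - c) * (1 - z) * ∑' k, qGaussTerm q a b c z k =
      (1 - a * z) * (1 - b * z) * ∑' k, qGaussTerm q a b (c * q) (z * q) k := by
  have hcq (j : ℕ) : c * q * q ^ j ≠ 1 := by simpa using mul_pow_mul_pow_ne_one hc 1 j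
  have hzq : ‖z * q‖ < 1 := by simpa using (norm_mul_pow_le hq.le z 1).trans_lt hz
  have hcert : Tendsto (qGaussCert q a b c z) atTop (𝓝 0) := by
    have hfactor : Tendsto (fun k => (1 - q ^ k) * (1 - c * q ^ k)) atTop (𝓝 1) := by
      simpa using ((tendsto_mul_pow_zero hq 1).const_sub 1).mul
        ((tendsto_mul_pow_zero hq c).const_sub 1)
    rw [← zero_mul 1]
    exact (summable_qGaussTerm hq hcq hz a b).tendsto_atTop_zero.mul hfactor
  rw [← tsum_mul_left, ← tsum_mul_left]
  exact tsum_eq_tsum_of_sub_eq_sub_succ ((summable_qGaussTerm hq hc hz a b).mul_left _)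
    ((summable_qGaussTerm hq hcq hzq a b).mul_left _) (by simp [qGaussCert]) hcert
    (qGaussTerm_contiguous (mul_pow_ne_one hq.le hq) hc habz)

lemma qPoch_mul_tsum_qGaussTerm (hq : ‖q‖ < 1) (hz : ‖z‖ < 1) (hc : ∀ j, c * q ^ j ≠ 1)
    (habz : a * b * z = c) (n : ℕ) :
    qPoch q c n * qPoch q z n * ∑' k, qGaussTerm q a b c z k =
      qPoch q (a * z) n * qPoch q (b * z) n *
        ∑' k, qGaussTerm q a b (c * q ^ n) (z * q ^ n) k := by
  have hstep (m : ℕ) := tsum_qGaussTerm_contiguous (a := a) (b := b) (c := c * q ^ m) hq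
    ((norm_mul_pow_le hq.le z m).trans_lt hz)
    (mul_pow_mul_pow_ne_one hc m) (by rw [← habz]; ring)
  have := prod_range_mul_eq_prod_range_mul
    (r := fun j => (1 - c * q ^ j) * (1 - z * q ^ j))
    (s := fun j => (1 - a * z * q ^ j) * (1 - b * z * q ^ j))
    (S := fun m => ∑' k, qGaussTerm q a b (c * q ^ m) (z * q ^ m) k)
    (fun m => by simpa only [mul_assoc, pow_succ] using hstep m) n
  simpa [qPoch, prod_mul_distrib] using this

lemma tendsto_tsum_qGaussTerm (hq : ‖q‖ < 1) (hz : ‖z‖ < 1) (hc : ∀ j, c * q ^ j ≠ 1) :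
    Tendsto (fun n => ∑' k, qGaussTerm q a b (c * q ^ n) (z * q ^ n) k) atTop (𝓝 1) := by
  obtain ⟨K, hK₀, hK⟩ := exists_norm_qGaussTerm_le hq hc a b
  have hlim : ∑' k, qGaussTerm q a b 0 0 k = 1 := by
    rw [tsum_eq_single 0 fun k hk => by simp [qGaussTerm, zero_pow hk]]
    simp [qGaussTerm]
  rw [← hlim]
  refine tendsto_tsum_of_dominated_convergence (bound := fun k => K * ‖z‖ ^ k)
    ((summable_geometric_of_lt_one (norm_nonneg z) hz).mul_left K) (fun k => ?_)
    (.of_forall fun n k => (hK n k _).trans ?_)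
  · have hden : qPoch q q k * qPoch q 0 k ≠ 0 := by
      simpa [qPoch] using qPoch_ne_zero (mul_pow_ne_one hq.le hq) k
    exact (tendsto_const_nhds.mul ((tendsto_mul_pow_zero hq z).pow k)).div
      (tendsto_const_nhds.mul (((continuous_qPoch q k).tendsto 0).comp
        (tendsto_mul_pow_zero hq c))) hden
  · gcongr
    exact norm_mul_pow_le hq.le z n

lemma qPochInf_mul_tsum_qGaussTerm (hq : ‖q‖ < 1) (hz : ‖z‖ < 1) (hc : ∀ j, c * q ^ j ≠ 1)
    (habz : a * b * z = c) :
    qPochInf q c * qPochInf q z * ∑' k, qGaussTerm q a b c z k =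
      qPochInf q (a * z) * qPochInf q (b * z) := by
  have hl := ((tendsto_qPoch hq c).mul (tendsto_qPoch hq z)).mul_const
    (∑' k, qGaussTerm q a b c z k)
  have hr := ((tendsto_qPoch hq (a * z)).mul (tendsto_qPoch hq (b * z))).mul
    (tendsto_tsum_qGaussTerm (a := a) (b := b) hq hz hc)
  rw [mul_one] at hr
  exact tendsto_nhds_unique (hl.congr (qPoch_mul_tsum_qGaussTerm hq hz hc habz)) hr

end QGauss

/-- The q-Gauss sum (3.11):
`∑_{k=0}^∞ (a,b;q)_k (c/ab)^k / ((q,c;q)_k) = (c/a,c/b;q)_∞ / ((c,c/ab;q)_∞)`. -/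
theorem q_gauss_sum (q a b c : ℂ) (hq : ‖q‖ < 1) (ha : a ≠ 0) (hb : b ≠ 0)
    (hz : ‖c / (a * b)‖ < 1) (hc : ∀ j : ℕ, c * q ^ j ≠ 1) :
    Summable (fun k : ℕ =>
      qPoch q a k * qPoch q b k * (c / (a * b)) ^ k / (qPoch q q k * qPoch q c k)) ∧
    qPochInf q c * qPochInf q (c / (a * b)) ≠ 0 ∧
    ∑' k : ℕ, qPoch q a k * qPoch q b k * (c / (a * b)) ^ k /
        (qPoch q q k * qPoch q c k) =
      qPochInf q (c / a) * qPochInf q (c / b) /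
        (qPochInf q c * qPochInf q (c / (a * b))) := by
  have habz : a * b * (c / (a * b)) = c := by field_simp
  have hden : qPochInf q c * qPochInf q (c / (a * b)) ≠ 0 :=
    mul_ne_zero (qPochInf_ne_zero hq hc) (qPochInf_ne_zero hq (mul_pow_ne_one hq.le hz))
  refine ⟨summable_qGaussTerm hq hc hz a b, hden, ?_⟩
  have hca : c / a = b * (c / (a * b)) := by field_simp
  have hcb : c / b = a * (c / (a * b)) := by field_simp
  rw [eq_div_iff hden, hca, hcb, mul_comm, mul_comm (qPochInf q (b * _))]
  exact qPochInf_mul_tsum_qGaussTerm hq hz hc habz
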